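/- Let T be a locally finite rooted tree with Σ_k μ_k < ∞ and p > 1. For any f with f_o = 0 and f_i > f_{i*} for all i ∈ V \ {o} (f ∈ 𝔉_I), one has λ_p ≥ inf_{i ∈ V\{o}} I_i(f)^{-1}, where I_i(f) = (v_i(f_i - f_{i*})^{p-1})^{-1} Σ_{j ∈ V_i} μ_j f_j^{p-1} and λ_p = inf{D_p(f) : μ(|f|^p) = 1, f_o = 0}. -/

import Mathlib

/-!
Let `g` vanish at the root with `μ(|g|^p) = 1`. Writing `g k` as the telescoping sum of its
increments along the path from `k` to the root and applying Hölder's inequality with the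
increments of `f` as weights (they sum to `f k`) gives
`|g k|^p ≤ f k^(p-1) Σ_{i on the path} |g i - g i*|^p (f i - f i*)^(1-p)`.
Multiplying by `μ k`, summing over `k` and exchanging the order of summation, the right-hand
side becomes `Σ_{i ≠ o} I_i(f) v_i |g i - g i*|^p ≤ (sup_i I_i(f)) D_p(g)`, so
`1 ≤ (sup_i I_i(f)) D_p(g)`.
-/

open scoped ENNReal Classical BigOperators

/-- A rooted tree given by a parent map and a level function. -/
structure PTree (V : Type) where
  root : V
  par : V → V
  level : V → ℕ
  level_root : level root = 0
  par_root : par root = root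
  level_par : ∀ i, i ≠ root → level i = level (par i) + 1
  par_iter_root : ∀ i, par^[level i] i = root

/-- `T.anc k j` : `k` is an ancestor of `j` (or `j` itself), i.e. `j` lies in
the subtree `V_k` rooted at `k`. -/
def PTree.anc {V : Type} (T : PTree V) (k j : V) : Prop := ∃ m, T.par^[m] j = k

/-- The Dirichlet form `D_p(f) = Σ_{i ≠ o} v_i |f_i - f_{i*}|^p` (with values in `ℝ≥0∞`). -/
noncomputable def Dp {V : Type} (T : PTree V) (v : V → ℝ) (p : ℝ) (f : V → ℝ) : ℝ≥0∞ :=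
  ∑' i : {i : V // i ≠ T.root}, ENNReal.ofReal (v i.1 * |f i.1 - f (T.par i.1)| ^ p)

/-- The principal Dirichlet eigenvalue
`λ_p = inf { D_p(f) : μ(|f|^p) = 1, f_o = 0 }`. -/
noncomputable def lamP {V : Type} (T : PTree V) (v μ : V → ℝ) (p : ℝ) : ℝ≥0∞ :=
  ⨅ (f : V → ℝ) (_ : f T.root = 0)
    (_ : (∑' k : V, ENNReal.ofReal (μ k * |f k| ^ p)) = 1), Dp T v p f

/-- The single-summation operator
`I_i(f) = (v_i (f_i - f_{i*})^{p-1})⁻¹ Σ_{j ∈ V_i} μ_j f_j^{p-1}` (in `ℝ≥0∞`). -/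
noncomputable def Iop {V : Type} (T : PTree V) (v μ : V → ℝ) (p : ℝ)
    (f : V → ℝ) (i : V) : ℝ≥0∞ :=
  (∑' j : {j : V // T.anc i j}, ENNReal.ofReal (μ j.1 * f j.1 ^ (p - 1)))
    / ENNReal.ofReal (v i * (f i - f (T.par i)) ^ (p - 1))

namespace PTree

variable {V : Type} (T : PTree V)

lemma iterate_par_root (n : ℕ) : T.par^[n] T.root = T.root :=
  Function.iterate_fixed T.par_root n

lemma level_iterate_par (j : V) (m : ℕ) : T.level (T.par^[m] j) = T.level j - m := by
  induction m with
  | zero => rfl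
  | succ m ih =>
    rw [Function.iterate_succ_apply']
    by_cases h : T.par^[m] j = T.root
    · rw [h, T.par_root, T.level_root]
      rw [h, T.level_root] at ih
      omega
    · have := T.level_par _ h
      omega

lemma iterate_par_ne_root_iff {j : V} {m : ℕ} : T.par^[m] j ≠ T.root ↔ m < T.level j := by
  refine ⟨fun h => ?_, fun hm h => ?_⟩
  · by_contra! hm
    apply h
    rw [← Nat.sub_add_cancel hm, Function.iterate_add_apply, T.par_iter_root, T.iterate_par_root]
  · have := T.level_iterate_par j m
    rw [h, T.level_root] at this
    omega

lemma iterate_par_level_sub {i j : V} (hi : i ≠ T.root) (h : T.anc i j) :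
    T.level j - T.level i < T.level j ∧ T.par^[T.level j - T.level i] j = i := by
  obtain ⟨m, rfl⟩ := h
  have hm := T.iterate_par_ne_root_iff.1 hi
  rw [T.level_iterate_par, Nat.sub_sub_self hm.le]
  exact ⟨hm, rfl⟩

lemma sum_range_level_sub (F : V → ℝ) (k : V) :
    ∑ m ∈ Finset.range (T.level k), (F (T.par^[m] k) - F (T.par (T.par^[m] k))) =
      F k - F T.root := by
  simp_rw [← Function.iterate_succ_apply' T.par]
  rw [Finset.sum_range_sub', Function.iterate_zero_apply, T.par_iter_root]

/-- The edges on the path from `k` to the root, encoded as `(k, m)` with lower end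
`T.par^[m] k`, correspond to the pairs `(i, k)` with `i ≠ root` and `k ∈ V_i`. -/
def pathEquiv :
    (Σ k : V, {m : ℕ // m ∈ Finset.range (T.level k)}) ≃
      Σ i : {i : V // i ≠ T.root}, {j : V // T.anc i j} where
  toFun x := ⟨⟨T.par^[x.2] x.1, T.iterate_par_ne_root_iff.2 (Finset.mem_range.1 x.2.2)⟩,
    x.1, x.2, rfl⟩
  invFun y := ⟨y.2, T.level y.2 - T.level y.1,
    Finset.mem_range.2 (T.iterate_par_level_sub y.1.2 y.2.2).1⟩
  left_inv x := Sigma.subtype_ext rfl <| by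
    have := Finset.mem_range.1 x.2.2
    simp only [T.level_iterate_par]
    omega
  right_inv y := Sigma.subtype_ext (Subtype.ext (T.iterate_par_level_sub y.1.2 y.2.2).2) rfl

lemma tsum_sum_range_level_eq_tsum_tsum_anc (F : V → V → ℝ≥0∞) :
    ∑' k, ∑ m ∈ Finset.range (T.level k), F (T.par^[m] k) k =
      ∑' i : {i : V // i ≠ T.root}, ∑' j : {j : V // T.anc i j}, F i j := by
  simp_rw [← Finset.tsum_subtype]
  rw [← ENNReal.tsum_sigma fun k (m : {m // m ∈ Finset.range (T.level k)}) => F (T.par^[m] k) k,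
    ← ENNReal.tsum_sigma fun (i : {i : V // i ≠ T.root}) (j : {j // T.anc i j}) => F i j,
    ← T.pathEquiv.tsum_eq]
  rfl

end PTree

lemma rpow_sum_le_rpow_sum_weight_mul {ι : Type*} (s : Finset ι) {p : ℝ} (hp : 1 ≤ p)
    {a w : ι → ℝ} (ha : ∀ i ∈ s, 0 ≤ a i) (hw : ∀ i ∈ s, 0 < w i) :
    (∑ i ∈ s, a i) ^ p ≤
      (∑ i ∈ s, w i) ^ (p - 1) * ∑ i ∈ s, a i ^ p * w i ^ (1 - p) := by
  rcases s.eq_empty_or_nonempty with rfl | hs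
  · simp [Real.zero_rpow (by linarith : p ≠ 0)]
  set W := ∑ i ∈ s, w i
  have hW : 0 < W := Finset.sum_pos hw hs
  -- Jensen for `t ↦ t ^ p` at the points `a i / w i` with weights `w i / W`
  have jensen := Real.rpow_arith_mean_le_arith_mean_rpow s (fun i => w i / W)
    (fun i => a i / w i) (fun i hi => (div_pos (hw i hi) hW).le)
    (by rw [← Finset.sum_div, div_self hW.ne']) (fun i hi => div_nonneg (ha i hi) (hw i hi).le) hp
  have mean : ∑ i ∈ s, w i / W * (a i / w i) = (∑ i ∈ s, a i) / W := by
    rw [Finset.sum_div]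
    exact Finset.sum_congr rfl fun i hi => by field_simp [(hw i hi).ne']
  have mean_rpow : ∑ i ∈ s, w i / W * (a i / w i) ^ p =
      (∑ i ∈ s, a i ^ p * w i ^ (1 - p)) / W := by
    rw [Finset.sum_div]
    refine Finset.sum_congr rfl fun i hi => ?_
    rw [Real.div_rpow (ha i hi) (hw i hi).le, Real.rpow_sub (hw i hi), Real.rpow_one]
    field_simp
  rw [mean, mean_rpow, Real.div_rpow (Finset.sum_nonneg ha) hW.le,
    div_le_div_iff₀ (Real.rpow_pos_of_pos hW p) hW] at jensen
  rw [Real.rpow_sub_one hW.ne', div_mul_eq_mul_div, le_div_iff₀ hW]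
  linarith

namespace PTree

variable {V : Type} (T : PTree V) {f : V → ℝ}

lemma sub_par_iterate_pos (hf : ∀ i, i ≠ T.root → f (T.par i) < f i) {k : V} {m : ℕ}
    (hm : m ∈ Finset.range (T.level k)) : 0 < f (T.par^[m] k) - f (T.par (T.par^[m] k)) :=
  sub_pos.2 (hf _ (T.iterate_par_ne_root_iff.2 (Finset.mem_range.1 hm)))

lemma nonneg_of_par_lt (hf0 : f T.root = 0) (hf : ∀ i, i ≠ T.root → f (T.par i) < f i)
    (k : V) : 0 ≤ f k := by
  have hfk := T.sum_range_level_sub f k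
  rw [hf0, sub_zero] at hfk
  rw [← hfk]
  exact Finset.sum_nonneg fun m hm => (T.sub_par_iterate_pos hf hm).le

lemma abs_rpow_le_mul_sum_path {p : ℝ} (hp : 1 ≤ p) {g : V → ℝ} (hf0 : f T.root = 0)
    (hg0 : g T.root = 0) (hf : ∀ i, i ≠ T.root → f (T.par i) < f i) (k : V) :
    |g k| ^ p ≤ f k ^ (p - 1) * ∑ m ∈ Finset.range (T.level k),
      |g (T.par^[m] k) - g (T.par (T.par^[m] k))| ^ p *
        (f (T.par^[m] k) - f (T.par (T.par^[m] k))) ^ (1 - p) := by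
  have hfk : ∑ m ∈ Finset.range (T.level k), (f (T.par^[m] k) - f (T.par (T.par^[m] k))) =
      f k := by rw [T.sum_range_level_sub, hf0, sub_zero]
  calc |g k| ^ p
      = |∑ m ∈ Finset.range (T.level k), (g (T.par^[m] k) - g (T.par (T.par^[m] k)))| ^ p := by
        rw [T.sum_range_level_sub, hg0, sub_zero]
    _ ≤ (∑ m ∈ Finset.range (T.level k), |g (T.par^[m] k) - g (T.par (T.par^[m] k))|) ^ p :=
        Real.rpow_le_rpow (abs_nonneg _) (Finset.abs_sum_le_sum_abs _ _) (by linarith)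
    _ ≤ _ := by
        have := rpow_sum_le_rpow_sum_weight_mul (Finset.range (T.level k)) hp
          (a := fun m => |g (T.par^[m] k) - g (T.par (T.par^[m] k))|)
          (w := fun m => f (T.par^[m] k) - f (T.par (T.par^[m] k))) (fun m _ => abs_nonneg _)
          fun m hm => T.sub_par_iterate_pos hf hm
        rwa [hfk] at this

end PTree

lemma Iop_mul_ofReal_eq {V : Type} (T : PTree V) {v : V → ℝ} (μ : V → ℝ) {p : ℝ}
    {f : V → ℝ} (g : V → ℝ) {i : V} (hv : 0 < v i) (hfi : f (T.par i) < f i) :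
    Iop T v μ p f i * ENNReal.ofReal (v i * |g i - g (T.par i)| ^ p) =
      (∑' j : {j : V // T.anc i j}, ENNReal.ofReal (μ j * f j ^ (p - 1))) *
        ENNReal.ofReal (|g i - g (T.par i)| ^ p * (f i - f (T.par i)) ^ (1 - p)) := by
  have hdf : 0 < f i - f (T.par i) := sub_pos.2 hfi
  have split : v i * |g i - g (T.par i)| ^ p =
      v i * (f i - f (T.par i)) ^ (p - 1) *
        (|g i - g (T.par i)| ^ p * (f i - f (T.par i)) ^ (1 - p)) := by
    rw [mul_mul_mul_comm, ← Real.rpow_add hdf, sub_add_sub_cancel, sub_self, Real.rpow_zero,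
      mul_one]
  have hden : ENNReal.ofReal (v i * (f i - f (T.par i)) ^ (p - 1)) ≠ 0 :=
    (ENNReal.ofReal_pos.2 (by positivity)).ne'
  rw [Iop, split, ENNReal.ofReal_mul (p := v i * (f i - f (T.par i)) ^ (p - 1)) (by positivity),
    ← mul_assoc, ENNReal.div_mul_cancel hden ENNReal.ofReal_ne_top]

lemma tsum_ofReal_mul_abs_rpow_le_iSup_Iop_mul_Dp {V : Type} (T : PTree V) {v μ : V → ℝ}
    {p : ℝ} (hp : 1 ≤ p) (hv : ∀ i, 0 < v i) (hμ : ∀ i, 0 ≤ μ i) {f g : V → ℝ}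
    (hf0 : f T.root = 0) (hg0 : g T.root = 0) (hf : ∀ i, i ≠ T.root → f (T.par i) < f i) :
    ∑' k, ENNReal.ofReal (μ k * |g k| ^ p) ≤
      (⨆ i : {i : V // i ≠ T.root}, Iop T v μ p f i) * Dp T v p g := by
  set S := ⨆ i : {i : V // i ≠ T.root}, Iop T v μ p f i
  set c : V → ℝ := fun i => |g i - g (T.par i)| ^ p * (f i - f (T.par i)) ^ (1 - p)
  set e : V → ℝ≥0∞ := fun i => ENNReal.ofReal (v i * |g i - g (T.par i)| ^ p)
  have pointwise (k : V) : ENNReal.ofReal (μ k * |g k| ^ p) ≤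
      ∑ m ∈ Finset.range (T.level k),
        ENNReal.ofReal (μ k * f k ^ (p - 1)) * ENNReal.ofReal (c (T.par^[m] k)) := by
    have hc : ∀ m ∈ Finset.range (T.level k), 0 ≤ c (T.par^[m] k) := fun m hm =>
      mul_nonneg (Real.rpow_nonneg (abs_nonneg _) _)
        (Real.rpow_nonneg (T.sub_par_iterate_pos hf hm).le _)
    have hμf : 0 ≤ μ k * f k ^ (p - 1) :=
      mul_nonneg (hμ k) (Real.rpow_nonneg (T.nonneg_of_par_lt hf0 hf k) _)
    calc ENNReal.ofReal (μ k * |g k| ^ p)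
        ≤ ENNReal.ofReal (μ k * (f k ^ (p - 1) * ∑ m ∈ Finset.range (T.level k),
            c (T.par^[m] k))) :=
          ENNReal.ofReal_le_ofReal <| mul_le_mul_of_nonneg_left
            (T.abs_rpow_le_mul_sum_path hp hf0 hg0 hf k) (hμ k)
      _ = _ := by
          rw [← mul_assoc, ENNReal.ofReal_mul hμf, ENNReal.ofReal_sum_of_nonneg hc,
            Finset.mul_sum]
  calc ∑' k, ENNReal.ofReal (μ k * |g k| ^ p)
      ≤ ∑' k, ∑ m ∈ Finset.range (T.level k),
          ENNReal.ofReal (μ k * f k ^ (p - 1)) * ENNReal.ofReal (c (T.par^[m] k)) :=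
        ENNReal.tsum_le_tsum pointwise
    _ = ∑' i : {i : V // i ≠ T.root}, ∑' j : {j : V // T.anc i j},
          ENNReal.ofReal (μ j * f j ^ (p - 1)) * ENNReal.ofReal (c i) :=
        T.tsum_sum_range_level_eq_tsum_tsum_anc fun i j =>
          ENNReal.ofReal (μ j * f j ^ (p - 1)) * ENNReal.ofReal (c i)
    _ = ∑' i : {i : V // i ≠ T.root}, Iop T v μ p f i * e i :=
        tsum_congr fun i => by
          rw [ENNReal.tsum_mul_right, Iop_mul_ofReal_eq T μ g (hv i) (hf i i.2)]
    _ ≤ ∑' i : {i : V // i ≠ T.root}, S * e i :=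
        ENNReal.tsum_le_tsum fun i =>
          mul_le_mul_left (le_iSup (fun i : {i : V // i ≠ T.root} => Iop T v μ p f i) i) _
    _ = S * Dp T v p g := ENNReal.tsum_mul_left

theorem inf_Iop_inv_le_lamP_general {V : Type} (T : PTree V) (v μ : V → ℝ) (p : ℝ)
    (hp : 1 < p) (hv : ∀ i, 0 < v i) (hμ : ∀ i, 0 < μ i)
    (f : V → ℝ) (hf0 : f T.root = 0)
    (hf : ∀ i, i ≠ T.root → f (T.par i) < f i) :
    (⨅ i : {i : V // i ≠ T.root}, (Iop T v μ p f i.1)⁻¹) ≤ lamP T v μ p := by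
  rw [← ENNReal.inv_iSup, lamP]
  refine le_iInf₂ fun g hg0 => le_iInf fun hg => ?_
  have key := tsum_ofReal_mul_abs_rpow_le_iSup_Iop_mul_Dp T hp.le hv (fun i => (hμ i).le)
    hf0 hg0 hf
  rw [hg] at key
  exact (ENNReal.inv_le_iff_le_mul (fun _ h => by simp [h] at key)
    (fun _ h => by simp [h] at key)).2 key

/-- Lower bound half of the single-summation variational formula:
for `f ∈ 𝔉_I`, `λ_p ≥ inf_{i ≠ o} I_i(f)⁻¹`. -/
theorem inf_Iop_inv_le_lamP {V : Type} (T : PTree V) (v μ : V → ℝ) (p : ℝ)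
    (hp : 1 < p) (hv : ∀ i, 0 < v i) (hμ : ∀ i, 0 < μ i)
    (hmass : (∑' k : V, ENNReal.ofReal (μ k)) ≠ ⊤)
    (f : V → ℝ) (hf0 : f T.root = 0)
    (hf : ∀ i, i ≠ T.root → f (T.par i) < f i) :
    (⨅ i : {i : V // i ≠ T.root}, (Iop T v μ p f i.1)⁻¹) ≤ lamP T v μ p :=
  inf_Iop_inv_le_lamP_general T v μ p hp hv hμ f hf0 hf
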